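/- (Theorem 3: Correctness of the Transient Signal Decomposition Algorithm) Suppose αₖ ≠ 0 for all k ∈ ℕ. Define recursively x₁ := x, γₖ := lim_{t → ∞} −(1/t) log|xₖ(t)|, βₖ := lim_{t → ∞} e^{γₖ t} xₖ(t), and x_{k+1}(t) := xₖ(t) − βₖ e^{-γₖ t}. Then all of these limits exist and the algorithm recovers the correct parameters: γₖ = λₖ and βₖ = αₖ for every k ∈ ℕ. -/

import Mathlib

open Filter Real Set

open Topology

/-! Subtracting the first `k` exponentials from `x` leaves the tail series
`∑_{n ≥ k} αₙ e^{-λₙ t}`. After multiplication by `e^{λₖ t}` its leading term is `αₖ` and every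
other term decays at the rate `λₙ - λₖ > 0`, so by dominated convergence for series it tends to
`αₖ`; since `αₖ ≠ 0`, taking logarithms gives `-(1/t) log |xₖ(t)| → λₖ`. -/

theorem summable_mul_exp_neg_mul {c ν : ℕ → ℝ} {m t : ℝ} (hc : Summable fun n => |c n|)
    (hν : ∀ n, m ≤ ν n) (ht : 0 ≤ t) : Summable fun n => c n * exp (-ν n * t) :=
  (hc.mul_right (exp (-m * t))).of_norm_bounded fun n => by
    rw [norm_mul, Real.norm_eq_abs, Real.norm_of_nonneg (exp_pos _).le]
    gcongr
    nlinarith [hν n]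

/-- Tannery's theorem: each term decays, and all are dominated by `|c n|` once `t ≥ 0`. -/
theorem tendsto_tsum_mul_exp_neg_mul_atTop {c ν : ℕ → ℝ} (hc : Summable fun n => |c n|)
    (hν : ∀ n, 0 < ν n) :
    Tendsto (fun t => ∑' n, c n * exp (-ν n * t)) atTop (𝓝 0) := by
  have hterm (n : ℕ) : Tendsto (fun t => c n * exp (-ν n * t)) atTop (𝓝 0) := by
    simpa using (tendsto_exp_atBot.comp
      (tendsto_id.const_mul_atTop_of_neg (neg_lt_zero.2 (hν n)))).const_mul (c n)
  have hbound : ∀ᶠ t in atTop, ∀ n, ‖c n * exp (-ν n * t)‖ ≤ |c n| := by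
    filter_upwards [eventually_ge_atTop 0] with t ht n
    rw [norm_mul, Real.norm_eq_abs, Real.norm_of_nonneg (exp_pos _).le]
    exact mul_le_of_le_one_right (abs_nonneg _) (exp_le_one_iff.2 (by nlinarith [hν n]))
  simpa using tendsto_tsum_of_dominated_convergence hc hterm hbound

theorem tendsto_exp_mul_tsum_mul_exp_neg_mul {c ν : ℕ → ℝ} (hc : Summable fun n => |c n|)
    (hν : ∀ n, ν 0 < ν (n + 1)) :
    Tendsto (fun t => exp (ν 0 * t) * ∑' n, c n * exp (-ν n * t)) atTop (𝓝 (c 0)) := by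
  have hgap : ∀ n, 0 ≤ ν n - ν 0
    | 0 => by simp
    | n + 1 => sub_nonneg.2 (hν n).le
  have hsplit : ∀ᶠ t in atTop, c 0 + ∑' n, c (n + 1) * exp (-(ν (n + 1) - ν 0) * t) =
      exp (ν 0 * t) * ∑' n, c n * exp (-ν n * t) := by
    filter_upwards [eventually_ge_atTop 0] with t ht
    have hshift (n : ℕ) :
        exp (ν 0 * t) * (c n * exp (-ν n * t)) = c n * exp (-(ν n - ν 0) * t) := by
      rw [mul_left_comm, ← exp_add]
      ring_nf
    rw [← tsum_mul_left, tsum_congr hshift,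
      (summable_mul_exp_neg_mul hc hgap ht).tsum_eq_zero_add]
    simp
  have htail := tendsto_tsum_mul_exp_neg_mul_atTop ((summable_nat_add_iff 1).2 hc)
    fun n => sub_pos.2 (hν n)
  simpa using (tendsto_const_nhds.add htail).congr' hsplit

theorem tendsto_neg_one_div_mul_log_abs {f : ℝ → ℝ} {γ β : ℝ} (hβ : β ≠ 0)
    (hf : Tendsto (fun t => exp (γ * t) * f t) atTop (𝓝 β)) :
    Tendsto (fun t => -(1 / t) * log |f t|) atTop (𝓝 γ) := by
  have hlog : Tendsto (fun t => log |exp (γ * t) * f t| / t) atTop (𝓝 0) :=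
    ((continuousAt_log (abs_ne_zero.2 hβ)).tendsto.comp hf.abs).div_atTop tendsto_id
  have hf_ne : ∀ᶠ t in atTop, f t ≠ 0 :=
    (hf.eventually_ne hβ).mono fun t h => right_ne_zero_of_mul h
  have hlim : Tendsto (fun t => γ - log |exp (γ * t) * f t| / t) atTop (𝓝 γ) := by
    simpa using tendsto_const_nhds.sub hlog
  refine hlim.congr' ?_
  filter_upwards [hf_ne, eventually_gt_atTop 0] with t hft ht
  rw [abs_mul, abs_exp, log_mul (exp_ne_zero _) (abs_ne_zero.2 hft), log_exp]
  field_simp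
  ring

noncomputable def residualSignal (x : ℝ → ℝ) (a lam : ℕ → ℝ) (k : ℕ) (t : ℝ) : ℝ :=
  x t - ∑ j ∈ Finset.range k, a j * exp (-lam j * t)

theorem residualSignal_zero (x : ℝ → ℝ) (a lam : ℕ → ℝ) : residualSignal x a lam 0 = x := by
  funext t
  simp [residualSignal]

theorem residualSignal_succ (x : ℝ → ℝ) (a lam : ℕ → ℝ) (k : ℕ) (t : ℝ) :
    residualSignal x a lam (k + 1) t = residualSignal x a lam k t - a k * exp (-lam k * t) := by
  simp only [residualSignal, Finset.sum_range_succ]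
  ring

theorem residualSignal_eq_tsum {x : ℝ → ℝ} {a lam : ℕ → ℝ} (ha : Summable fun n => |a n|)
    (hlam : Monotone lam) (hx : ∀ t ≥ (0 : ℝ), x t = ∑' n, a n * exp (-lam n * t))
    (k : ℕ) {t : ℝ} (ht : 0 ≤ t) :
    residualSignal x a lam k t = ∑' n, a (n + k) * exp (-lam (n + k) * t) := by
  have hsum := summable_mul_exp_neg_mul ha (fun n => hlam (Nat.zero_le n)) ht
  rw [residualSignal, hx t ht, ← hsum.sum_add_tsum_nat_add k]
  ring

theorem transient_signal_algorithm_correctness_general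
    (lam : ℕ → ℝ) (hlam_mono : StrictMono lam)
    (a : ℕ → ℝ) (ha : Summable fun n => |a n|)
    (x : ℝ → ℝ)
    (hx : ∀ t ≥ (0 : ℝ), x t = ∑' n, a n * Real.exp (-lam n * t))
    (ha_ne : ∀ k, a k ≠ 0) :
    ∃ (γ β : ℕ → ℝ) (xs : ℕ → ℝ → ℝ),
      (∀ t, xs 0 t = x t) ∧
      (∀ k, Tendsto (fun t => -(1 / t) * Real.log |xs k t|) atTop (nhds (γ k))) ∧
      (∀ k, Tendsto (fun t => Real.exp (γ k * t) * xs k t) atTop (nhds (β k))) ∧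
      (∀ k t, xs (k + 1) t = xs k t - β k * Real.exp (-γ k * t)) ∧
      (∀ k, γ k = lam k ∧ β k = a k) := by
  have hlead (k : ℕ) :
      Tendsto (fun t => exp (lam k * t) * residualSignal x a lam k t) atTop (𝓝 (a k)) := by
    have h := tendsto_exp_mul_tsum_mul_exp_neg_mul (c := fun n => a (n + k))
      (ν := fun n => lam (n + k)) ((summable_nat_add_iff k).2 ha) fun n => hlam_mono (by omega)
    simp only [zero_add] at h
    refine h.congr' ?_
    filter_upwards [eventually_ge_atTop 0] with t ht
    rw [residualSignal_eq_tsum ha hlam_mono.monotone hx k ht]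
  refine ⟨lam, a, residualSignal x a lam, fun t => by rw [residualSignal_zero],
    fun k => tendsto_neg_one_div_mul_log_abs (ha_ne k) (hlead k), hlead,
    residualSignal_succ x a lam, fun k => ⟨rfl, rfl⟩⟩

/-- Theorem 3: Correctness of the Transient Signal Decomposition Algorithm.
Suppose `αₖ ≠ 0` for all `k`. There exist sequences `γ`, `β` and residual signals `xs`
with `xs 0 = x`, where at each stage `γₖ` is the limit of `−(1/t) log|xₖ(t)|`, `βₖ` is the
limit of `e^{γₖ t} xₖ(t)` (in particular, all these limits exist), and
`x_{k+1}(t) = xₖ(t) − βₖ e^{-γₖ t}`; moreover the algorithm recovers the correct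
parameters: `γₖ = λₖ` and `βₖ = αₖ` for every `k`. -/
theorem transient_signal_algorithm_correctness
    (lam : ℕ → ℝ) (hlam_pos : ∀ n, 0 < lam n) (hlam_mono : StrictMono lam)
    (a : ℕ → ℝ) (ha : Summable fun n => |a n|)
    (x : ℝ → ℝ)
    (hx : ∀ t ≥ (0 : ℝ), x t = ∑' n, a n * Real.exp (-lam n * t))
    (ha_ne : ∀ k, a k ≠ 0) :
    ∃ (γ β : ℕ → ℝ) (xs : ℕ → ℝ → ℝ),
      (∀ t, xs 0 t = x t) ∧
      (∀ k, Tendsto (fun t => -(1 / t) * Real.log |xs k t|) atTop (nhds (γ k))) ∧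
      (∀ k, Tendsto (fun t => Real.exp (γ k * t) * xs k t) atTop (nhds (β k))) ∧
      (∀ k t, xs (k + 1) t = xs k t - β k * Real.exp (-γ k * t)) ∧
      (∀ k, γ k = lam k ∧ β k = a k) :=
  transient_signal_algorithm_correctness_general lam hlam_mono a ha x hx ha_ne
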